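/- Let m ≥ 4 with m ≡ 6 (mod 8). Then the bent functions f_{2,3} and f_{0,1} are anti-self-dual: for f ∈ {f_{2,3}, f_{0,1}} and every y ∈ F_2^m, ∑_{x ∈ F_2^m} (-1)^{f(x) + x·y} = -2^{m/2} · (-1)^{f(y)}. -/
import Mathlib


open Finset

/-- Hamming weight of a vector of `F₂^m`. -/
def wt {m : ℕ} (x : Fin m → ZMod 2) : ℕ :=
  (Finset.univ.filter (fun i => x i = 1)).card

/-- The Boolean function `f_{i₁,i₂}` : value `1` iff `wt x ≡ i₁ or i₂ (mod 4)`. -/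
def bf (i₁ i₂ : ℕ) {m : ℕ} (x : Fin m → ZMod 2) : ZMod 2 :=
  if wt x % 4 = i₁ ∨ wt x % 4 = i₂ then 1 else 0

/-- Inner product over `F₂`. -/
def dot {m : ℕ} (a x : Fin m → ZMod 2) : ZMod 2 := ∑ i, a i * x i

/- ------------------ auxiliary material ------------------ -/

namespace Stmt16Aux

def chi (a : ZMod 2) : ℤ := (-1) ^ a.val

def I : GaussianInt := ⟨0, 1⟩

lemma chi_add (a b : ZMod 2) : chi (a + b) = chi a * chi b := by revert a b; decide

lemma chi_sum {α : Type*} (s : Finset α) (g : α → ZMod 2) :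
    chi (∑ i ∈ s, g i) = ∏ i ∈ s, chi (g i) := by
  classical
  induction s using Finset.cons_induction with
  | empty => simp [chi]
  | cons a s ha ih => rw [Finset.sum_cons, Finset.prod_cons, chi_add, ih]

lemma wt_eq_sum {m : ℕ} (x : Fin m → ZMod 2) : wt x = ∑ i, (x i).val := by
  have h : ∀ a : ZMod 2, (if a = 1 then 1 else 0) = a.val := by decide
  unfold wt
  rw [Finset.card_filter]
  exact Finset.sum_congr rfl fun i _ => h (x i)

lemma inner_sum (c : ZMod 2) :
    ∑ a : ZMod 2, I ^ a.val * (chi (a * c) : GaussianInt) = (1 + I) * (-I) ^ c.val := by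
  have huniv : (Finset.univ : Finset (ZMod 2)) = {0, 1} := by decide
  rw [huniv, Finset.sum_insert (by decide), Finset.sum_singleton]
  revert c; decide

lemma re_sum {α : Type*} (s : Finset α) (g : α → GaussianInt) :
    (∑ x ∈ s, g x).re = ∑ x ∈ s, (g x).re := by
  classical
  induction s using Finset.cons_induction with
  | empty => simp
  | cons a s ha ih => rw [Finset.sum_cons, Finset.sum_cons, Zsqrtd.re_add, ih]

set_option maxHeartbeats 1000000 in
lemma gi_sum {m : ℕ} (y : Fin m → ZMod 2) :
    ∑ x : Fin m → ZMod 2, I ^ wt x * (chi (dot x y) : GaussianInt)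
      = (1 + I) ^ m * (-I) ^ wt y := by
  classical
  have h1 : ∀ x : Fin m → ZMod 2,
      I ^ wt x * (chi (dot x y) : GaussianInt)
        = ∏ j, (I ^ (x j).val * (chi (x j * y j) : GaussianInt)) := by
    intro x
    rw [wt_eq_sum, dot, chi_sum, ← Finset.prod_pow_eq_pow_sum, Finset.prod_mul_distrib]
    push_cast
    ring
  calc ∑ x : Fin m → ZMod 2, I ^ wt x * (chi (dot x y) : GaussianInt)
      = ∑ x : Fin m → ZMod 2, ∏ j, (I ^ (x j).val * (chi (x j * y j) : GaussianInt)) :=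
        Finset.sum_congr rfl fun x _ => h1 x
    _ = ∏ j, ∑ a : ZMod 2, I ^ a.val * (chi (a * y j) : GaussianInt) :=
        (Fintype.prod_sum fun j a => I ^ a.val * (chi (a * y j) : GaussianInt)).symm
    _ = ∏ j, (1 + I) * (-I) ^ (y j).val := Finset.prod_congr rfl fun j _ => inner_sum (y j)
    _ = (1 + I) ^ m * (-I) ^ wt y := by
        rw [Finset.prod_mul_distrib, Finset.prod_const, Finset.card_univ, Fintype.card_fin,
          Finset.prod_pow_eq_pow_sum, wt_eq_sum]

lemma re_aux2 (n : ℕ) :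
    ((1 + I) * (-I) ^ n).re = if n % 4 = 2 ∨ n % 4 = 3 then -1 else 1 := by
  have h4 : (-I) ^ 4 = 1 := by decide
  have hpow : (-I) ^ n = (-I) ^ (n % 4) := by
    conv_lhs => rw [← Nat.div_add_mod n 4]
    rw [pow_add, pow_mul, h4, one_pow, one_mul]
  have hlt : n % 4 = 0 ∨ n % 4 = 1 ∨ n % 4 = 2 ∨ n % 4 = 3 := by omega
  rw [hpow]
  rcases hlt with h | h | h | h <;> rw [h] <;> decide

lemma chi_bf23 {m : ℕ} (x : Fin m → ZMod 2) :
    chi (bf 2 3 x) = if wt x % 4 = 2 ∨ wt x % 4 = 3 then -1 else 1 := by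
  unfold bf
  split_ifs <;> rfl

lemma re_mul_intCast (z : GaussianInt) (c : ℤ) : (z * (c : GaussianInt)).re = z.re * c := by
  simp [Zsqrtd.re_mul]

/-- the key Walsh-sum computation for `bf 2 3`. -/
lemma core (m : ℕ) (h8 : m % 8 = 6) (y : Fin m → ZMod 2) :
    ∑ x : Fin m → ZMod 2, chi (bf 2 3 x) * chi (dot x y)
      = -(2 ^ (m / 2)) * chi (bf 2 3 y) := by
  classical
  obtain ⟨k, hk⟩ : ∃ k, m = 8 * k + 6 := ⟨m / 8, by omega⟩
  -- rewrite each term through the Gaussian integers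
  have hterm : ∀ x : Fin m → ZMod 2,
      chi (bf 2 3 x) * chi (dot x y)
        = ((1 - I) * (I ^ wt x * (chi (dot x y) : GaussianInt))).re := by
    intro x
    rw [show (1 - I) * (I ^ wt x * (chi (dot x y) : GaussianInt))
        = ((1 - I) * I ^ wt x) * (chi (dot x y) : GaussianInt) by ring,
      re_mul_intCast, chi_bf23]
    congr 1
    -- ((1 - I) * I ^ wt x).re = if ...
    have h4 : I ^ 4 = 1 := by decide
    have hpow : I ^ wt x = I ^ (wt x % 4) := by
      conv_lhs => rw [← Nat.div_add_mod (wt x) 4]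
      rw [pow_add, pow_mul, h4, one_pow, one_mul]
    have hlt : wt x % 4 = 0 ∨ wt x % 4 = 1 ∨ wt x % 4 = 2 ∨ wt x % 4 = 3 := by omega
    rw [hpow]
    rcases hlt with h | h | h | h <;> rw [h] <;> decide
  calc ∑ x : Fin m → ZMod 2, chi (bf 2 3 x) * chi (dot x y)
      = ∑ x : Fin m → ZMod 2,
          ((1 - I) * (I ^ wt x * (chi (dot x y) : GaussianInt))).re :=
        Finset.sum_congr rfl fun x _ => hterm x
    _ = ((1 - I) * ∑ x : Fin m → ZMod 2, I ^ wt x * (chi (dot x y) : GaussianInt)).re := by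
        rw [Finset.mul_sum, re_sum]
    _ = ((1 - I) * ((1 + I) ^ m * (-I) ^ wt y)).re := by rw [gi_sum]
    _ = -(2 ^ (m / 2)) * chi (bf 2 3 y) := by
        have h8pow : (1 + I) ^ 8 = (16 : GaussianInt) := by decide
        have h6 : (1 - I) * (1 + I) ^ 6 = (-8 : GaussianInt) * (1 + I) := by decide
        have hpm : ((1 + I : GaussianInt)) ^ m = 16 ^ k * (1 + I) ^ 6 := by
          rw [hk, pow_add, pow_mul, h8pow]
        have hfac : (1 - I) * ((1 + I) ^ m * (-I) ^ wt y)
            = ((1 + I) * (-I) ^ wt y) * ((16 ^ k * (-8) : ℤ) : GaussianInt) := by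
          rw [hpm]
          push_cast
          calc (1 - I) * ((16 : GaussianInt) ^ k * (1 + I) ^ 6 * (-I) ^ wt y)
              = ((1 - I) * (1 + I) ^ 6) * ((16 : GaussianInt) ^ k * (-I) ^ wt y) := by ring
            _ = ((1 + I) * (-I) ^ wt y) * ((16 : GaussianInt) ^ k * (-8)) := by rw [h6]; ring
        rw [hfac, re_mul_intCast, re_aux2, chi_bf23]
        have hdiv : m / 2 = 4 * k + 3 := by omega
        have hp : (2 : ℤ) ^ (m / 2) = 16 ^ k * 8 := by
          rw [hdiv, pow_add, pow_mul]
          norm_num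
        rw [hp]
        ring

lemma bf01_eq {m : ℕ} (x : Fin m → ZMod 2) : bf 0 1 x = 1 + bf 2 3 x := by
  unfold bf
  have h : wt x % 4 = 0 ∨ wt x % 4 = 1 ∨ wt x % 4 = 2 ∨ wt x % 4 = 3 := by omega
  rcases h with h | h | h | h <;> simp [h] <;> decide

lemma chi_one_add (a : ZMod 2) : chi (1 + a) = -chi a := by revert a; decide

end Stmt16Aux

open Stmt16Aux in
theorem stmt_16 (m : ℕ) (hm : 4 ≤ m) (h8 : m % 8 = 6) :
    ∀ f ∈ ({@bf 2 3 m, @bf 0 1 m} : Set ((Fin m → ZMod 2) → ZMod 2)),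
      ∀ y : Fin m → ZMod 2,
        (∑ x : Fin m → ZMod 2, (-1 : ℤ) ^ (f x + dot x y).val)
          = -(2 ^ (m / 2)) * (-1 : ℤ) ^ (f y).val := by
  have key : ∀ y : Fin m → ZMod 2,
      (∑ x : Fin m → ZMod 2, chi (bf 2 3 x + dot x y))
        = -(2 ^ (m / 2)) * chi (bf 2 3 y) := by
    intro y
    rw [← core m h8 y]
    exact Finset.sum_congr rfl fun x _ => chi_add _ _
  intro f hf y
  rcases hf with hf | hf <;> subst hf
  · exact key y
  · have h1 : ∀ x : Fin m → ZMod 2,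
        chi (bf 0 1 x + dot x y) = -chi (bf 2 3 x + dot x y) := by
      intro x
      rw [bf01_eq, add_assoc, chi_one_add]
    calc (∑ x : Fin m → ZMod 2, chi (bf 0 1 x + dot x y))
        = -∑ x : Fin m → ZMod 2, chi (bf 2 3 x + dot x y) := by
          rw [← Finset.sum_neg_distrib]
          exact Finset.sum_congr rfl fun x _ => h1 x
      _ = -(2 ^ (m / 2)) * chi (bf 0 1 y) := by
          rw [key y, bf01_eq, chi_one_add]
          ring
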